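/- Let Σ ∈ R^{d×d} be symmetric positive definite and β ∈ R^d. Then the function Φ(u) = uᵀ(Σβ exp((1/2)βᵀΣβ)) − exp((1/2)uᵀΣu) is strictly concave on R^d, tends to −∞ as ‖u‖ → ∞, and its gradient Ψ(u) = Σ(β exp((1/2)βᵀΣβ) − u exp((1/2)uᵀΣu)) has a unique zero, namely u = β. -/

import Mathlib

open Matrix Filter

private theorem quad_combo' {d : ℕ} (S : Matrix (Fin d) (Fin d) ℝ) (x y : Fin d → ℝ) (a b : ℝ)
    (hab : a + b = 1) :
    (a • x + b • y) ⬝ᵥ (S *ᵥ (a • x + b • y))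
      = a * (x ⬝ᵥ (S *ᵥ x)) + b * (y ⬝ᵥ (S *ᵥ y)) - a * b * ((x - y) ⬝ᵥ (S *ᵥ (x - y))) := by
  simp only [mulVec_add, mulVec_smul, mulVec_sub, dotProduct_add, add_dotProduct,
    smul_dotProduct, dotProduct_smul, sub_dotProduct, dotProduct_sub, smul_eq_mul]
  linear_combination (a * (x ⬝ᵥ (S *ᵥ x)) + b * (y ⬝ᵥ (S *ᵥ y))) * hab

private theorem coercive' {d : ℕ} (S : Matrix (Fin d) (Fin d) ℝ) (hS : S.PosDef) :
    ∃ c > 0, ∀ u : Fin d → ℝ, c * ‖u‖ ^ 2 ≤ u ⬝ᵥ (S *ᵥ u) := by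
  have hpos : ∀ x : Fin d → ℝ, x ≠ 0 → 0 < x ⬝ᵥ (S *ᵥ x) := fun x hx => by
    simpa using hS.dotProduct_mulVec_pos hx
  rcases Nat.eq_zero_or_pos d with h | h
  · subst h
    refine ⟨1, one_pos, fun u => ?_⟩
    have hu : u = 0 := Subsingleton.elim _ _
    rw [hu, norm_zero]
    simp
  · haveI : Nonempty (Fin d) := ⟨⟨0, h⟩⟩
    have hcont : Continuous fun u : Fin d → ℝ => u ⬝ᵥ (S *ᵥ u) := by
      have : (fun u : Fin d → ℝ => u ⬝ᵥ (S *ᵥ u))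
          = fun u => ∑ i, u i * ∑ j, S i j * u j := rfl
      rw [this]
      exact continuous_finset_sum _ fun i _ =>
        (continuous_apply i).mul (continuous_finset_sum _ fun j _ =>
          (continuous_const.mul (continuous_apply j)))
    have hcpt : IsCompact (Metric.sphere (0 : Fin d → ℝ) 1) := isCompact_sphere 0 1
    have hne : (Metric.sphere (0 : Fin d → ℝ) 1).Nonempty :=
      NormedSpace.sphere_nonempty.mpr zero_le_one
    obtain ⟨z, hz, hmin⟩ := hcpt.exists_isMinOn hne hcont.continuousOn
    have hz1 : ‖z‖ = 1 := by simpa using hz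
    have hz0 : z ≠ 0 := fun hzz => by simp [hzz] at hz1
    refine ⟨z ⬝ᵥ (S *ᵥ z), hpos z hz0, fun u => ?_⟩
    rcases eq_or_ne u 0 with rfl | hu
    · simp
    · have hnu : (0:ℝ) < ‖u‖ := norm_pos_iff.mpr hu
      set w : Fin d → ℝ := ‖u‖⁻¹ • u with hw
      have hwsph : w ∈ Metric.sphere (0 : Fin d → ℝ) 1 := by
        simp [hw, norm_smul, abs_of_pos (inv_pos.mpr hnu), inv_mul_cancel₀ hnu.ne']
      have hkey : z ⬝ᵥ (S *ᵥ z) ≤ w ⬝ᵥ (S *ᵥ w) := hmin hwsph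
      have hexp : w ⬝ᵥ (S *ᵥ w) = ‖u‖⁻¹ ^ 2 * (u ⬝ᵥ (S *ᵥ u)) := by
        simp only [hw, mulVec_smul, smul_dotProduct, dotProduct_smul, smul_eq_mul]
        ring
      rw [hexp] at hkey
      have := mul_le_mul_of_nonneg_left hkey (le_of_lt (pow_pos hnu 2))
      calc z ⬝ᵥ (S *ᵥ z) * ‖u‖ ^ 2 = ‖u‖ ^ 2 * (z ⬝ᵥ (S *ᵥ z)) := by ring
        _ ≤ ‖u‖ ^ 2 * (‖u‖⁻¹ ^ 2 * (u ⬝ᵥ (S *ᵥ u))) := this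
        _ = u ⬝ᵥ (S *ᵥ u) := by field_simp

private theorem mono_helper' {q : ℝ} (hq : 0 < q) {t : ℝ} (ht : 0 < t)
    (heq : t * Real.exp ((1/2) * (t^2 * q)) = Real.exp ((1/2) * q)) : t = 1 := by
  rcases lt_trichotomy t 1 with h | h | h
  · exfalso
    have h1 : Real.exp ((1/2) * (t^2 * q)) < Real.exp ((1/2) * q) := by
      apply Real.exp_lt_exp.mpr
      nlinarith [mul_pos (mul_pos (sub_pos.mpr h) (by linarith : (0:ℝ) < 1 + t)) hq]
    nlinarith [Real.exp_pos ((1/2) * (t^2 * q))]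
  · exact h
  · exfalso
    have h1 : Real.exp ((1/2) * q) < Real.exp ((1/2) * (t^2 * q)) := by
      apply Real.exp_lt_exp.mpr
      nlinarith [mul_pos (mul_pos (sub_pos.mpr h) (by linarith : (0:ℝ) < 1 + t)) hq]
    nlinarith [Real.exp_pos ((1/2) * q)]

/-- For `Σ` symmetric positive definite and `β ∈ ℝ^d`, the population criterion
`Φ(u) = uᵀ(Σβ e^{(1/2)βᵀΣβ}) − e^{(1/2)uᵀΣu}` is strictly concave, tends to `−∞`
as `‖u‖ → ∞`, and its gradient
`Ψ(u) = Σ(β e^{(1/2)βᵀΣβ} − u e^{(1/2)uᵀΣu})` has `u = β` as its unique zero. -/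
theorem population_criterion_unique_zero {d : ℕ}
    (S : Matrix (Fin d) (Fin d) ℝ) (hS : S.PosDef) (β : Fin d → ℝ) :
    StrictConcaveOn ℝ Set.univ
        (fun u : Fin d → ℝ =>
          u ⬝ᵥ (Real.exp ((1 / 2) * (β ⬝ᵥ (S *ᵥ β))) • (S *ᵥ β)) -
            Real.exp ((1 / 2) * (u ⬝ᵥ (S *ᵥ u)))) ∧
      Tendsto
        (fun u : Fin d → ℝ =>
          u ⬝ᵥ (Real.exp ((1 / 2) * (β ⬝ᵥ (S *ᵥ β))) • (S *ᵥ β)) -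
            Real.exp ((1 / 2) * (u ⬝ᵥ (S *ᵥ u))))
        (comap (fun u : Fin d → ℝ => ‖u‖) atTop) atBot ∧
      ∀ u : Fin d → ℝ,
        S *ᵥ (Real.exp ((1 / 2) * (β ⬝ᵥ (S *ᵥ β))) • β -
            Real.exp ((1 / 2) * (u ⬝ᵥ (S *ᵥ u))) • u) = 0 ↔ u = β := by
  have hpos : ∀ x : Fin d → ℝ, x ≠ 0 → 0 < x ⬝ᵥ (S *ᵥ x) := fun x hx => by
    simpa using hS.dotProduct_mulVec_pos hx
  refine ⟨?_, ?_, ?_⟩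
  · -- strict concavity
    set m : Fin d → ℝ := Real.exp ((1 / 2) * (β ⬝ᵥ (S *ᵥ β))) • (S *ᵥ β) with hm
    refine ⟨convex_univ, fun x _ y _ hxy a b ha hb hab => ?_⟩
    have hW : 0 < (x - y) ⬝ᵥ (S *ᵥ (x - y)) := hpos _ (sub_ne_zero.mpr hxy)
    have hquad := quad_combo' S x y a b hab
    have hlin : (a • x + b • y) ⬝ᵥ m = a * (x ⬝ᵥ m) + b * (y ⬝ᵥ m) := by
      simp [add_dotProduct, smul_dotProduct]
    have h1 : Real.exp ((1/2) * ((a • x + b • y) ⬝ᵥ (S *ᵥ (a • x + b • y))))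
        < Real.exp (a * ((1/2) * (x ⬝ᵥ (S *ᵥ x))) + b * ((1/2) * (y ⬝ᵥ (S *ᵥ y)))) := by
      apply Real.exp_lt_exp.mpr
      rw [hquad]
      nlinarith [mul_pos (mul_pos ha hb) hW]
    have h2 : Real.exp (a * ((1/2) * (x ⬝ᵥ (S *ᵥ x))) + b * ((1/2) * (y ⬝ᵥ (S *ᵥ y))))
        ≤ a * Real.exp ((1/2) * (x ⬝ᵥ (S *ᵥ x))) + b * Real.exp ((1/2) * (y ⬝ᵥ (S *ᵥ y))) := by
      have := convexOn_exp.2 (Set.mem_univ ((1/2) * (x ⬝ᵥ (S *ᵥ x))))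
        (Set.mem_univ ((1/2) * (y ⬝ᵥ (S *ᵥ y)))) ha.le hb.le hab
      simpa using this
    simp only [smul_eq_mul, hlin]
    have := h1.trans_le h2
    linarith
  · -- tendsto atBot
    obtain ⟨c, hc, hcoer⟩ := coercive' S hS
    set m : Fin d → ℝ := Real.exp ((1 / 2) * (β ⬝ᵥ (S *ᵥ β))) • (S *ᵥ β) with hm
    set K : ℝ := ∑ i, |m i| with hK
    have hdot : ∀ u : Fin d → ℝ, u ⬝ᵥ m ≤ K * ‖u‖ := by
      intro u
      calc u ⬝ᵥ m = ∑ i, u i * m i := rfl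
        _ ≤ ∑ i, |m i| * ‖u‖ := by
            apply Finset.sum_le_sum
            intro i _
            calc u i * m i ≤ |u i * m i| := le_abs_self _
              _ = |u i| * |m i| := abs_mul _ _
              _ ≤ ‖u‖ * |m i| := by
                  have : |u i| ≤ ‖u‖ := by
                    simpa [Real.norm_eq_abs] using norm_le_pi_norm u i
                  exact mul_le_mul_of_nonneg_right this (abs_nonneg _)
              _ = |m i| * ‖u‖ := mul_comm _ _
        _ = K * ‖u‖ := by rw [← Finset.sum_mul]
    have hexp : ∀ u : Fin d → ℝ, c/2 * ‖u‖^2 ≤ Real.exp ((1/2) * (u ⬝ᵥ (S *ᵥ u))) := by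
      intro u
      have h1 : c/2 * ‖u‖^2 ≤ (1/2) * (u ⬝ᵥ (S *ᵥ u)) := by linarith [hcoer u]
      linarith [Real.add_one_le_exp ((1/2) * (u ⬝ᵥ (S *ᵥ u)))]
    have hF : Tendsto (fun r : ℝ => K * r - c/2 * r^2) atTop atBot := by
      have h1 : Tendsto (fun r : ℝ => c/2 * r - K) atTop atTop :=
        tendsto_atTop_add_const_right _ _ (tendsto_id.const_mul_atTop (by positivity))
      have h2 : Tendsto (fun r : ℝ => r * (c/2 * r - K)) atTop atTop :=
        tendsto_id.atTop_mul_atTop₀ h1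
      have h3 : Tendsto (fun r : ℝ => -(r * (c/2 * r - K))) atTop atBot :=
        tendsto_neg_atTop_atBot.comp h2
      convert h3 using 2 with r
      ring
    apply tendsto_atBot_mono (f := fun u : Fin d → ℝ => K * ‖u‖ - c/2 * ‖u‖^2)
    · intro u
      have := hdot u
      have := hexp u
      linarith
    · exact hF.comp tendsto_comap
  · -- unique zero
    intro u
    constructor
    · intro h0
      set cβ : ℝ := Real.exp ((1 / 2) * (β ⬝ᵥ (S *ᵥ β))) with hcβ
      set cu : ℝ := Real.exp ((1 / 2) * (u ⬝ᵥ (S *ᵥ u))) with hcu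
      have hcu0 : 0 < cu := Real.exp_pos _
      have hw : cβ • β - cu • u = 0 := by
        by_contra hw
        have h1 := hpos _ hw
        rw [show (cβ • β - cu • u) ⬝ᵥ (S *ᵥ (cβ • β - cu • u)) = 0 by rw [h0]; simp] at h1
        exact lt_irrefl _ h1
      have heq : cβ • β = cu • u := sub_eq_zero.mp hw
      rcases eq_or_ne β 0 with rfl | hβ
      · have : cu • u = 0 := by rw [← heq]; simp
        rcases smul_eq_zero.mp this with h | h
        · exact absurd h hcu0.ne'
        · exact h
      · have hq : 0 < β ⬝ᵥ (S *ᵥ β) := hpos β hβ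
        set t : ℝ := cβ / cu with htdef
        have ht : 0 < t := div_pos (Real.exp_pos _) hcu0
        have hu : u = t • β := by
          have : cu⁻¹ • (cβ • β) = cu⁻¹ • (cu • u) := by rw [heq]
          rw [smul_smul, smul_smul, inv_mul_cancel₀ hcu0.ne', one_smul] at this
          rw [← this, htdef, div_eq_inv_mul]
        have hquad : u ⬝ᵥ (S *ᵥ u) = t^2 * (β ⬝ᵥ (S *ᵥ β)) := by
          rw [hu]
          simp only [mulVec_smul, smul_dotProduct, dotProduct_smul, smul_eq_mul]
          ring
        obtain ⟨i, hi⟩ := Function.ne_iff.mp hβ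
        have hscal : cβ = cu * t := by
          have h1 : cβ * β i = cu * (t * β i) := by
            have := congrFun heq i
            rw [hu] at this
            simpa [Pi.smul_apply, smul_eq_mul, mul_assoc] using this
          have hbi : β i ≠ 0 := by simpa using hi
          field_simp at h1
          exact h1
        have ht1 : t = 1 := by
          apply mono_helper' hq ht
          have hcu' : cu = Real.exp ((1/2) * (t^2 * (β ⬝ᵥ (S *ᵥ β)))) := by
            rw [hcu, hquad]
          rw [← hcu', ← hcβ]
          linarith [hscal]
        rw [hu, ht1, one_smul]
    · rintro rfl
      simp
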